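/- arXiv:1610.00913 — 3 statements merged into one kernel-verified Lean document; each statement's English description precedes it below -/
import Mathlib

section
/- Let Ω ⊆ ℝⁿ be a nonempty open set, t₀ ∈ ℝ, and let H : ℝ × ℝⁿ → ℝⁿ be continuous on [t₀,∞) × Ω and locally Lipschitz in its second (state) argument there. Then for every initial condition ξ⁰ ∈ Ω there exist t_max ∈ (t₀, ∞] and a function ξ : [t₀, t_max) → ℝⁿ with ξ(t₀) = ξ⁰ such that ξ(t) ∈ Ω and ξ has derivative H(t, ξ(t)) at every t ∈ [t₀, t_max), and this solution is maximal: there is no t₁ > t_max together with a function ζ : [t₀, t₁) → Ω solving the same initial value problem and agreeing with ξ on [t₀, t_max). -/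
/-!
Local existence is Peano's theorem, proved with Tonelli's delayed approximations
`u(t) = x₀ + ∫_{t₀}^{max t₀ (t - h)} G(s, u(s)) ds`: the delay makes `u` the stable value of
finitely many iterations of an explicit map, all approximations are `C`-Lipschitz for a bound
`C` of `G`, and by Arzelà–Ascoli a subsequence with `h → 0` converges to a solution of the
integral equation. To make `G` bounded and globally defined, `H` is composed with a clamping of
time to `[t₀, t₀ + 1]` and a radial retraction onto a closed ball in `Ω`; for short times the
solution stays in that ball and so solves the original equation.

Maximal solutions then come from Zorn's lemma: solutions are ordered by extension, and a chain
is bounded by the solution glued from its members on the supremum of their intervals.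
-/

open Set Filter Topology NNReal intervalIntegral BoundedContinuousFunction

section Tonelli

variable {E : Type*} [NormedAddCommGroup E] [NormedSpace ℝ E]
  {G : ℝ → E → E} {C : ℝ≥0} {t₀ : ℝ} {x₀ : E} {h : ℝ}

noncomputable def tonelliMap (G : ℝ → E → E) (t₀ : ℝ) (x₀ : E) (h : ℝ) (g : ℝ → E) :
    ℝ → E :=
  fun t => x₀ + ∫ s in t₀..max t₀ (t - h), G s (g s)

lemma tonelliMap_apply_of_le (hh : 0 ≤ h) (g : ℝ → E) {t : ℝ} (ht : t ≤ t₀) :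
    tonelliMap G t₀ x₀ h g t = x₀ := by
  rw [tonelliMap, max_eq_left (by linarith), integral_same, add_zero]

lemma tonelliMap_lipschitzWith (hG : Continuous (Function.uncurry G))
    (hb : ∀ t x, ‖G t x‖ ≤ C) {g : ℝ → E} (hg : Continuous g) :
    LipschitzWith C (tonelliMap G t₀ x₀ h g) := by
  have hint : ∀ a b : ℝ, IntervalIntegrable (fun s => G s (g s)) MeasureTheory.volume a b :=
    (hG.comp (continuous_id.prodMk hg)).intervalIntegrable
  refine LipschitzWith.of_dist_le_mul fun t t' => ?_
  rw [dist_eq_norm, tonelliMap, tonelliMap, add_sub_add_left_eq_sub,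
    integral_interval_sub_left (hint _ _) (hint _ _)]
  calc ‖∫ s in max t₀ (t' - h)..max t₀ (t - h), G s (g s)‖
      ≤ C * |max t₀ (t - h) - max t₀ (t' - h)| :=
        norm_integral_le_of_norm_le_const fun s _ => hb s (g s)
    _ ≤ C * dist t t' := by
        gcongr
        rw [max_comm t₀, max_comm t₀, Real.dist_eq]
        exact (abs_max_sub_max_le_abs _ _ _).trans_eq (by ring_nf)

lemma tonelliMap_eqOn_Iic {g₁ g₂ : ℝ → E} {b : ℝ} (hb : t₀ ≤ b)
    (heq : EqOn g₁ g₂ (Iic b)) :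
    EqOn (tonelliMap G t₀ x₀ h g₁) (tonelliMap G t₀ x₀ h g₂) (Iic (b + h)) := by
  intro t ht
  simp only [tonelliMap]
  congr 1
  refine integral_congr fun s hs => ?_
  rw [uIcc_of_le (le_max_left _ _)] at hs
  have : s ≤ b := hs.2.trans (max_le hb (by linarith [mem_Iic.mp ht]))
  simp only [heq this]

lemma norm_tonelliMap_sub_integral_le (hG : Continuous (Function.uncurry G))
    (hb : ∀ t x, ‖G t x‖ ≤ C) (hh : 0 ≤ h) {g : ℝ → E} (hg : Continuous g) {t : ℝ}
    (ht : t₀ ≤ t) :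
    ‖tonelliMap G t₀ x₀ h g t - (x₀ + ∫ s in t₀..t, G s (g s))‖ ≤ C * h := by
  have hint : ∀ a b : ℝ, IntervalIntegrable (fun s => G s (g s)) MeasureTheory.volume a b :=
    (hG.comp (continuous_id.prodMk hg)).intervalIntegrable
  rw [tonelliMap, add_sub_add_left_eq_sub, integral_interval_sub_left (hint _ _) (hint _ _)]
  calc ‖∫ s in t..max t₀ (t - h), G s (g s)‖ ≤ C * |max t₀ (t - h) - t| :=
        norm_integral_le_of_norm_le_const fun s _ => hb s (g s)
    _ ≤ C * h := by
        gcongr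
        rw [abs_of_nonpos (sub_nonpos.mpr (max_le ht (by linarith)))]
        linarith [le_max_right t₀ (t - h)]

lemma tonelliMap_iterate_lipschitzWith (hG : Continuous (Function.uncurry G))
    (hb : ∀ t x, ‖G t x‖ ≤ C) (k : ℕ) :
    LipschitzWith C ((tonelliMap G t₀ x₀ h)^[k] fun _ => x₀) := by
  induction k with
  | zero => exact LipschitzWith.const' x₀
  | succ k ih =>
      rw [Function.iterate_succ_apply']
      exact tonelliMap_lipschitzWith hG hb ih.continuous

lemma tonelliMap_iterate_succ_eqOn (hh : 0 ≤ h) (k : ℕ) :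
    EqOn ((tonelliMap G t₀ x₀ h)^[k + 1] fun _ => x₀) ((tonelliMap G t₀ x₀ h)^[k] fun _ => x₀)
      (Iic (t₀ + k * h)) := by
  induction k with
  | zero =>
      intro t ht
      simpa using tonelliMap_apply_of_le hh _ (by simpa using ht)
  | succ k ih =>
      have := tonelliMap_eqOn_Iic (G := G) (x₀ := x₀) (h := h)
        (by nlinarith [k.cast_nonneg (α := ℝ)]) ih
      rwa [← Function.iterate_succ_apply' (tonelliMap G t₀ x₀ h),
        ← Function.iterate_succ_apply' (tonelliMap G t₀ x₀ h), add_assoc, ← add_one_mul,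
        ← Nat.cast_succ] at this

noncomputable def tonelliApprox (G : ℝ → E → E) (t₀ : ℝ) (x₀ : E) (δ : ℝ) (n : ℕ) : ℝ → E :=
  (tonelliMap G t₀ x₀ (δ / (n + 1)))^[n + 1] fun _ => x₀

lemma tonelliApprox_lipschitzWith (hG : Continuous (Function.uncurry G))
    (hb : ∀ t x, ‖G t x‖ ≤ C) (δ : ℝ) (n : ℕ) : LipschitzWith C (tonelliApprox G t₀ x₀ δ n) :=
  tonelliMap_iterate_lipschitzWith hG hb _

lemma tonelliApprox_apply_self {δ : ℝ} (hδ : 0 ≤ δ) (n : ℕ) :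
    tonelliApprox G t₀ x₀ δ n t₀ = x₀ := by
  rw [tonelliApprox, Function.iterate_succ_apply']
  exact tonelliMap_apply_of_le (by positivity) _ le_rfl

lemma norm_tonelliApprox_sub_integral_le (hG : Continuous (Function.uncurry G))
    (hb : ∀ t x, ‖G t x‖ ≤ C) {δ : ℝ} (hδ : 0 ≤ δ) (n : ℕ) {t : ℝ} (ht : t ∈ Icc t₀ (t₀ + δ)) :
    ‖tonelliApprox G t₀ x₀ δ n t - (x₀ + ∫ s in t₀..t, G s (tonelliApprox G t₀ x₀ δ n s))‖
      ≤ C * (δ / (n + 1)) := by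
  have hh : 0 ≤ δ / (n + 1) := by positivity
  have hfix : tonelliMap G t₀ x₀ (δ / (n + 1)) (tonelliApprox G t₀ x₀ δ n) t
      = tonelliApprox G t₀ x₀ δ n t := by
    rw [tonelliApprox, ← Function.iterate_succ_apply' (tonelliMap G t₀ x₀ (δ / (n + 1)))]
    refine tonelliMap_iterate_succ_eqOn hh (n + 1) (mem_Iic.mpr ?_)
    rw [Nat.cast_succ, mul_div_cancel₀ _ (by positivity)]
    exact ht.2
  rw [← hfix]
  exact norm_tonelliMap_sub_integral_le hG hb hh
    (tonelliApprox_lipschitzWith hG hb δ n).continuous ht.1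

end Tonelli

lemma exists_subseq_tendsto_of_lipschitzWith {X F : Type*} [PseudoMetricSpace X] [CompactSpace X]
    [MetricSpace F] [ProperSpace F] {C : ℝ≥0} {u : ℕ → X → F} {c : F} {R : ℝ}
    (hu : ∀ n, LipschitzWith C (u n)) (hR : ∀ n x, u n x ∈ Metric.closedBall c R) :
    ∃ f : X → F, LipschitzWith C f ∧
      ∃ φ : ℕ → ℕ, StrictMono φ ∧ Tendsto (u ∘ φ) atTop (𝓝 f) := by
  let v : ℕ → X →ᵇ F := fun n => .mkOfCompact ⟨u n, (hu n).continuous⟩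
  have hcpt : IsCompact (closure (range v)) := by
    refine BoundedContinuousFunction.arzela_ascoli _ (isCompact_closedBall c R) _
      (by rintro _ x ⟨n, rfl⟩; exact hR n x) ?_
    refine Metric.equicontinuous_of_continuity_modulus (fun r => C * r) ?_ _ ?_
    · simpa using (continuous_const_mul (C : ℝ)).tendsto 0
    · rintro x y ⟨_, n, rfl⟩
      exact (hu n).dist_le_mul x y
  obtain ⟨g, -, φ, hφ, hg⟩ := hcpt.tendsto_subseq fun n => subset_closure (mem_range_self n)
  have hlim : Tendsto (u ∘ φ) atTop (𝓝 ⇑g) :=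
    (BoundedContinuousFunction.continuous_coe.tendsto g).comp hg
  exact ⟨g, (isClosed_setOfPred_lipschitzWith C).mem_of_tendsto hlim (.of_forall fun k => hu _),
    φ, hφ, hlim⟩

section Peano

variable {E : Type*} [NormedAddCommGroup E] [NormedSpace ℝ E] {G : ℝ → E → E} {C : ℝ≥0}

lemma tendsto_intervalIntegral_comp_of_tendsto (hG : Continuous (Function.uncurry G))
    (hb : ∀ t x, ‖G t x‖ ≤ C) {u : ℕ → ℝ → E} (hu : ∀ k, Continuous (u k)) {x : ℝ → E}
    {a b : ℝ} (hab : a ≤ b) (hlim : ∀ s ∈ Icc a b, Tendsto (fun k => u k s) atTop (𝓝 (x s))) :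
    Tendsto (fun k => ∫ s in a..b, G s (u k s)) atTop (𝓝 (∫ s in a..b, G s (x s))) := by
  refine tendsto_integral_filter_of_dominated_convergence (fun _ => (C : ℝ))
    (.of_forall fun k => (hG.comp (continuous_id.prodMk (hu k))).aestronglyMeasurable)
    (.of_forall fun k => .of_forall fun s _ => hb s _) intervalIntegrable_const
    (.of_forall fun s hs => ?_)
  rw [uIoc_of_le hab] at hs
  exact ((hG.comp (continuous_const.prodMk continuous_id)).tendsto _).comp
    (hlim s (Ioc_subset_Icc_self hs))

/-- **Peano's existence theorem**, in integral form. -/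
theorem exists_continuous_eq_integral [ProperSpace E] (hG : Continuous (Function.uncurry G))
    (hb : ∀ t x, ‖G t x‖ ≤ C) (t₀ : ℝ) (x₀ : E) {δ : ℝ} (hδ : 0 ≤ δ) :
    ∃ x : ℝ → E, Continuous x ∧ ∀ t ∈ Icc t₀ (t₀ + δ), x t = x₀ + ∫ s in t₀..t, G s (x s) := by
  have : CompactSpace (Icc t₀ (t₀ + δ)) := isCompact_iff_compactSpace.mp isCompact_Icc
  set u := tonelliApprox G t₀ x₀ δ
  have hu : ∀ n, LipschitzWith C (u n) := tonelliApprox_lipschitzWith hG hb δ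
  have hball : ∀ n (s : Icc t₀ (t₀ + δ)), u n s ∈ Metric.closedBall x₀ (C * δ) := by
    intro n s
    calc dist (u n s) x₀ = dist (u n s) (u n t₀) := by
          rw [show u n t₀ = x₀ from tonelliApprox_apply_self hδ n]
      _ ≤ C * dist (s : ℝ) t₀ := (hu n).dist_le_mul _ _
      _ ≤ C * δ := by
          gcongr
          rw [Real.dist_eq, abs_of_nonneg] <;> linarith [s.2.1, s.2.2]
  obtain ⟨f, hf, φ, hφ, hlim⟩ := exists_subseq_tendsto_of_lipschitzWith
    (u := fun n (s : Icc t₀ (t₀ + δ)) => u n s) (fun n => (hu n).restrict _) hball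
  set x := f ∘ projIcc t₀ (t₀ + δ) (by linarith)
  refine ⟨x, (hf.comp (LipschitzWith.projIcc _)).continuous, fun t ht => ?_⟩
  have hconv : ∀ s ∈ Icc t₀ (t₀ + δ), Tendsto (fun k => u (φ k) s) atTop (𝓝 (x s)) :=
    fun s hs => by simpa [x, projIcc_of_mem _ hs] using tendsto_pi_nhds.1 hlim ⟨s, hs⟩
  have hint := tendsto_intervalIntegral_comp_of_tendsto hG hb (fun k => (hu (φ k)).continuous)
    ht.1 fun s hs => hconv s ⟨hs.1, hs.2.trans ht.2⟩
  have hdelay : Tendsto (fun k => (C : ℝ) * (δ / (φ k + 1))) atTop (𝓝 0) := by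
    simpa [div_eq_mul_inv, mul_assoc] using
      ((tendsto_one_div_add_atTop_nhds_zero_nat (𝕜 := ℝ)).comp hφ.tendsto_atTop).const_mul
        ((C : ℝ) * δ)
  have herr : Tendsto (fun k => u (φ k) t - (x₀ + ∫ s in t₀..t, G s (u (φ k) s))) atTop (𝓝 0) :=
    squeeze_zero_norm (fun k => norm_tonelliApprox_sub_integral_le hG hb hδ (φ k) ht) hdelay
  exact sub_eq_zero.mp (tendsto_nhds_unique ((hconv t ht).sub (hint.const_add x₀)) herr)

end Peano

section LocalExistence

variable {E F : Type*} [NormedAddCommGroup E] [NormedSpace ℝ E]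

noncomputable def closedBallRetract (c : E) (r : ℝ) (x : E) : E :=
  c + (r / max r ‖x - c‖) • (x - c)

lemma continuous_closedBallRetract (c : E) {r : ℝ} (hr : 0 < r) :
    Continuous (closedBallRetract c r) := by
  have hden : ∀ x : E, max r ‖x - c‖ ≠ 0 := fun x => (hr.trans_le (le_max_left _ _)).ne'
  unfold closedBallRetract
  fun_prop (disch := exact hden _)

lemma closedBallRetract_mem (c : E) {r : ℝ} (hr : 0 < r) (x : E) :
    closedBallRetract c r x ∈ Metric.closedBall c r := by
  have hM : 0 < max r ‖x - c‖ := hr.trans_le (le_max_left _ _)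
  rw [Metric.mem_closedBall, dist_eq_norm, closedBallRetract, add_sub_cancel_left, norm_smul,
    Real.norm_of_nonneg (by positivity), div_mul_eq_mul_div, div_le_iff₀ hM]
  exact mul_le_mul_of_nonneg_left (le_max_right _ _) hr.le

lemma closedBallRetract_of_mem {c : E} {r : ℝ} (hr : 0 < r) {x : E}
    (hx : x ∈ Metric.closedBall c r) : closedBallRetract c r x = x := by
  rw [Metric.mem_closedBall, dist_eq_norm] at hx
  rw [closedBallRetract, max_eq_left hx, div_self hr.ne', one_smul, add_sub_cancel]

lemma exists_bounded_continuous_extension [ProperSpace E] [NormedAddCommGroup F]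
    {H : ℝ → E → F} {a b : ℝ} (hab : a ≤ b) {c : E} {r : ℝ} (hr : 0 < r)
    (hH : ContinuousOn (fun p : ℝ × E => H p.1 p.2) (Icc a b ×ˢ Metric.closedBall c r)) :
    ∃ G : ℝ → E → F, Continuous (Function.uncurry G) ∧ (∃ C : ℝ≥0, ∀ t x, ‖G t x‖ ≤ C) ∧
      ∀ t ∈ Icc a b, ∀ x ∈ Metric.closedBall c r, G t x = H t x := by
  let G t x := H (projIcc a b hab t) (closedBallRetract c r x)
  have hmaps : ∀ p : ℝ × E,
      ((projIcc a b hab p.1 : ℝ), closedBallRetract c r p.2) ∈ Icc a b ×ˢ Metric.closedBall c r :=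
    fun p => ⟨(projIcc a b hab p.1).2, closedBallRetract_mem c hr p.2⟩
  have hG : Continuous (Function.uncurry G) := hH.comp_continuous
    ((continuous_subtype_val.comp (continuous_projIcc.comp continuous_fst)).prodMk
      ((continuous_closedBallRetract c hr).comp continuous_snd)) hmaps
  obtain ⟨C, hC⟩ := (isCompact_Icc.prod (isCompact_closedBall c r)).exists_bound_of_continuousOn hH
  refine ⟨G, hG, ⟨C.toNNReal, fun t x => (hC _ (hmaps (t, x))).trans (Real.le_coe_toNNReal C)⟩,
    fun t ht x hx => ?_⟩
  simp only [G, projIcc_of_mem hab ht, closedBallRetract_of_mem hr hx]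

lemma hasDerivWithinAt_Ici_of_eq_integral [CompleteSpace E] {f g : ℝ → E} (hg : Continuous g)
    {x₀ : E} {a b : ℝ} (hf : ∀ t ∈ Icc a b, f t = x₀ + ∫ s in a..t, g s) {t : ℝ}
    (ht : t ∈ Ico a b) :
    HasDerivWithinAt f (g t) (Ici a) t := by
  have hderiv : HasDerivWithinAt f (g t) (Icc a b) t :=
    ((hg.integral_hasStrictDerivAt a t).hasDerivAt.const_add x₀).hasDerivWithinAt.congr hf
      (hf t (Ico_subset_Icc_self ht))
  refine hderiv.mono_of_mem_nhdsWithin ?_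
  rw [← Ici_inter_Iic]
  exact inter_mem_nhdsWithin _ (Iic_mem_nhds ht.2)

theorem exists_local_solution [ProperSpace E] {Ω : Set E} (hΩ : IsOpen Ω) {t₀ : ℝ}
    {H : ℝ → E → E} (hH : ContinuousOn (fun p : ℝ × E => H p.1 p.2) (Ici t₀ ×ˢ Ω))
    {ξ₀ : E} (hξ₀ : ξ₀ ∈ Ω) :
    ∃ T : ℝ, t₀ < T ∧ ∃ ξ : ℝ → E, ξ t₀ = ξ₀ ∧
      ∀ t ∈ Ico t₀ T, ξ t ∈ Ω ∧ HasDerivWithinAt ξ (H t (ξ t)) (Ici t₀) t := by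
  obtain ⟨r, hr, hrΩ⟩ := Metric.nhds_basis_closedBall.mem_iff.1 (hΩ.mem_nhds hξ₀)
  obtain ⟨G, hG, ⟨C, hb⟩, hGH⟩ := exists_bounded_continuous_extension
    (le_add_of_nonneg_right zero_le_one : t₀ ≤ t₀ + 1) hr
    (hH.mono (prod_mono Icc_subset_Ici_self hrΩ))
  obtain ⟨δ₀, hδ₀, hCδ₀⟩ := exists_pos_mul_lt hr C
  set δ := min 1 δ₀
  have hδ : 0 < δ := lt_min one_pos hδ₀
  obtain ⟨ξ, hξc, hξ⟩ := exists_continuous_eq_integral hG hb t₀ ξ₀ hδ.le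
  have hstay : ∀ t ∈ Icc t₀ (t₀ + δ), ξ t ∈ Metric.closedBall ξ₀ r := by
    intro t ht
    rw [Metric.mem_closedBall, dist_eq_norm, hξ t ht, add_sub_cancel_left]
    calc ‖∫ s in t₀..t, G s (ξ s)‖ ≤ C * |t - t₀| :=
          norm_integral_le_of_norm_le_const fun s _ => hb s _
      _ ≤ C * δ₀ := by
          gcongr
          rw [abs_of_nonneg (by linarith [ht.1])]
          linarith [ht.2, min_le_right 1 δ₀]
      _ ≤ r := hCδ₀.le
  refine ⟨t₀ + δ, by linarith, ξ, by simpa using hξ t₀ (by simp [hδ.le]), fun t ht => ?_⟩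
  have htδ := Ico_subset_Icc_self ht
  refine ⟨hrΩ (hstay t htδ), ?_⟩
  rw [← hGH t ⟨ht.1, by linarith [ht.2, min_le_left 1 δ₀]⟩ _ (hstay t htδ)]
  exact hasDerivWithinAt_Ici_of_eq_integral (hG.comp (continuous_id.prodMk hξc)) hξ ht

end LocalExistence

section Maximal

variable {E : Type*} [NormedAddCommGroup E] [NormedSpace ℝ E]

structure IVPSolution (H : ℝ → E → E) (Ω : Set E) (t₀ : ℝ) (ξ₀ : E) where
  T : EReal
  toFun : ℝ → E
  apply_initial : toFun t₀ = ξ₀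
  isSolution : ∀ t : ℝ, t₀ ≤ t → (t : EReal) < T →
    toFun t ∈ Ω ∧ HasDerivWithinAt toFun (H t (toFun t)) (Ici t₀) t

namespace IVPSolution

variable {H : ℝ → E → E} {Ω : Set E} {t₀ : ℝ} {ξ₀ : E}

def ofIco (T : ℝ) (ξ : ℝ → E) (h₀ : ξ t₀ = ξ₀)
    (h : ∀ t ∈ Ico t₀ T, ξ t ∈ Ω ∧ HasDerivWithinAt ξ (H t (ξ t)) (Ici t₀) t) :
    IVPSolution H Ω t₀ ξ₀ :=
  ⟨T, ξ, h₀, fun t ht htT => h t ⟨ht, EReal.coe_lt_coe_iff.mp htT⟩⟩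

instance : Preorder (IVPSolution H Ω t₀ ξ₀) where
  le p q := p.T ≤ q.T ∧ ∀ t : ℝ, t₀ ≤ t → (t : EReal) < p.T → q.toFun t = p.toFun t
  le_refl p := ⟨le_rfl, fun _ _ _ => rfl⟩
  le_trans p q r hpq hqr :=
    ⟨hpq.1.trans hqr.1, fun t ht htp => (hqr.2 t ht (htp.trans_le hpq.1)).trans (hpq.2 t ht htp)⟩

open Classical in
/-- The default value `ξ₀` keeps the initial condition when no member of `c` is defined at `t₀`. -/
noncomputable def chainFun (c : Set (IVPSolution H Ω t₀ ξ₀)) (t : ℝ) : E :=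
  if h : ∃ p ∈ c, t₀ ≤ t ∧ (t : EReal) < p.T then h.choose.toFun t else ξ₀

lemma chainFun_eq {c : Set (IVPSolution H Ω t₀ ξ₀)} (hc : IsChain (· ≤ ·) c) {p} (hp : p ∈ c)
    {t : ℝ} (ht : t₀ ≤ t) (htp : (t : EReal) < p.T) : chainFun c t = p.toFun t := by
  have hex : ∃ q ∈ c, t₀ ≤ t ∧ (t : EReal) < q.T := ⟨p, hp, ht, htp⟩
  obtain ⟨hq, -, htq⟩ := hex.choose_spec
  rw [chainFun, dif_pos hex]
  rcases hc.total hp hq with hpq | hqp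
  · exact hpq.2 t ht htp
  · exact (hqp.2 t ht htq).symm

lemma bddAbove_of_isChain {c : Set (IVPSolution H Ω t₀ ξ₀)} (hc : IsChain (· ≤ ·) c) :
    BddAbove c := by
  refine ⟨⟨sSup (T '' c), chainFun c, ?_, fun t ht htT => ?_⟩,
    fun p hp => ⟨le_sSup (mem_image_of_mem _ hp), fun t ht htp => chainFun_eq hc hp ht htp⟩⟩
  · rw [chainFun]
    split_ifs with h
    exacts [h.choose.apply_initial, rfl]
  · obtain ⟨_, ⟨p, hp, rfl⟩, htp⟩ := lt_sSup_iff.mp htT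
    have hnear : ∀ᶠ s in 𝓝[Ici t₀] t, t₀ ≤ s ∧ (s : EReal) < p.T :=
      Filter.Eventually.and self_mem_nhdsWithin (mem_nhdsWithin_of_mem_nhds
        ((isOpen_Iio.preimage continuous_coe_real_ereal).mem_nhds htp))
    have heq : chainFun c =ᶠ[𝓝[Ici t₀] t] p.toFun :=
      hnear.mono fun s hs => chainFun_eq hc hp hs.1 hs.2
    obtain ⟨hΩ, hderiv⟩ := p.isSolution t ht htp
    rw [chainFun_eq hc hp ht htp]
    exact ⟨hΩ, hderiv.congr_of_eventuallyEq heq (chainFun_eq hc hp ht htp)⟩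

lemma exists_le_isMax (p : IVPSolution H Ω t₀ ξ₀) : ∃ m, p ≤ m ∧ IsMax m :=
  zorn_le_nonempty_Ici₀ p (fun _ _ hc _ _ => bddAbove_of_isChain hc) p le_rfl

end IVPSolution

end Maximal

theorem maximal_solution_exists_general
    (n : ℕ) (Ω : Set (EuclideanSpace ℝ (Fin n))) (hΩ : IsOpen Ω)
    (t₀ : ℝ) (H : ℝ → EuclideanSpace ℝ (Fin n) → EuclideanSpace ℝ (Fin n))
    (hcont : ContinuousOn (fun p : ℝ × EuclideanSpace ℝ (Fin n) => H p.1 p.2)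
      (Set.Ici t₀ ×ˢ Ω))
    (ξ₀ : EuclideanSpace ℝ (Fin n)) (hξ₀ : ξ₀ ∈ Ω) :
    ∃ tmax : EReal, (t₀ : EReal) < tmax ∧
      ∃ ξ : ℝ → EuclideanSpace ℝ (Fin n),
        ξ t₀ = ξ₀ ∧
        (∀ t : ℝ, t₀ ≤ t → (t : EReal) < tmax →
          ξ t ∈ Ω ∧ HasDerivWithinAt ξ (H t (ξ t)) (Set.Ici t₀) t) ∧
        ¬ ∃ t₁ : ℝ, tmax < (t₁ : EReal) ∧
          ∃ ζ : ℝ → EuclideanSpace ℝ (Fin n),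
            ζ t₀ = ξ₀ ∧
            (∀ t ∈ Set.Ico t₀ t₁,
              ζ t ∈ Ω ∧ HasDerivWithinAt ζ (H t (ζ t)) (Set.Ici t₀) t) ∧
            (∀ t : ℝ, t₀ ≤ t → (t : EReal) < tmax → ζ t = ξ t) := by
  obtain ⟨T, hT, x, hx₀, hx⟩ := exists_local_solution hΩ hcont hξ₀
  obtain ⟨m, hm, hmax⟩ := (IVPSolution.ofIco T x hx₀ hx).exists_le_isMax
  refine ⟨m.T, (EReal.coe_lt_coe_iff.mpr hT).trans_le hm.1, m.toFun, m.apply_initial,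
    m.isSolution, ?_⟩
  rintro ⟨t₁, ht₁, ζ, hζ₀, hζ, hζm⟩
  exact (hmax (b := IVPSolution.ofIco t₁ ζ hζ₀ hζ) ⟨ht₁.le, hζm⟩).1.not_gt ht₁

/-- Existence of a maximal solution of the initial value problem
`ξ' = H(t, ξ)`, `ξ(t₀) = ξ⁰ ∈ Ω`, where `Ω ⊆ ℝⁿ` is a nonempty open set and
`H` is continuous on `[t₀,∞) × Ω` and locally Lipschitz in the state there. -/
theorem maximal_solution_exists
    (n : ℕ) (Ω : Set (EuclideanSpace ℝ (Fin n))) (hne : Ω.Nonempty) (hΩ : IsOpen Ω)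
    (t₀ : ℝ) (H : ℝ → EuclideanSpace ℝ (Fin n) → EuclideanSpace ℝ (Fin n))
    (hcont : ContinuousOn (fun p : ℝ × EuclideanSpace ℝ (Fin n) => H p.1 p.2)
      (Set.Ici t₀ ×ˢ Ω))
    (hlip : ∀ t ∈ Set.Ici t₀, ∀ x ∈ Ω,
      ∃ K : NNReal, ∃ s ∈ nhdsWithin x Ω, LipschitzOnWith K (H t) s)
    (ξ₀ : EuclideanSpace ℝ (Fin n)) (hξ₀ : ξ₀ ∈ Ω) :
    ∃ tmax : EReal, (t₀ : EReal) < tmax ∧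
      ∃ ξ : ℝ → EuclideanSpace ℝ (Fin n),
        ξ t₀ = ξ₀ ∧
        (∀ t : ℝ, t₀ ≤ t → (t : EReal) < tmax →
          ξ t ∈ Ω ∧ HasDerivWithinAt ξ (H t (ξ t)) (Set.Ici t₀) t) ∧
        ¬ ∃ t₁ : ℝ, tmax < (t₁ : EReal) ∧
          ∃ ζ : ℝ → EuclideanSpace ℝ (Fin n),
            ζ t₀ = ξ₀ ∧
            (∀ t ∈ Set.Ico t₀ t₁,
              ζ t ∈ Ω ∧ HasDerivWithinAt ζ (H t (ζ t)) (Set.Ici t₀) t) ∧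
            (∀ t : ℝ, t₀ ≤ t → (t : EReal) < tmax → ζ t = ξ t) :=
  maximal_solution_exists_general n Ω hΩ t₀ H hcont ξ₀ hξ₀
end

section
/- Let t₀ < T ≤ ∞, let E be a real inner product space, let f : ℝ → E be differentiable at every t ∈ [t₀, T) with derivative f'(t), and let c ≥ 0. Suppose that for every t ∈ (t₀, T), ‖f(t)‖ > c implies ⟨f(t), f'(t)⟩ ≤ 0. Then ‖f(t)‖ ≤ max{‖f(t₀)‖, c} for every t ∈ [t₀, T). -/
/-!
Apply the scalar invariance principle to `‖f‖²`, whose derivative is `2⟪f, f'⟫`. For the scalar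
principle, if `g` exceeded the level `K` at `x`, let `s` be the last time in `[a, x]` at which
`g ≤ K`; on `(s, x]` the derivative of `g` is nonpositive, so `g x ≤ g s ≤ K`.
-/

open Set
open scoped RealInnerProductSpace

theorem image_le_of_deriv_nonpos_above {g g' : ℝ → ℝ} {a b K : ℝ}
    (hg : ContinuousOn g (Icc a b)) (hg' : ∀ x ∈ Ioo a b, HasDerivAt g (g' x) x)
    (hneg : ∀ x ∈ Ioo a b, K < g x → g' x ≤ 0) (ha : g a ≤ K) :
    ∀ x ∈ Icc a b, g x ≤ K := by
  intro x hx
  by_contra! hKx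
  set S := Icc a x ∩ g ⁻¹' Iic K
  have haS : a ∈ S := ⟨left_mem_Icc.2 hx.1, ha⟩
  have hS_closed : IsClosed S :=
    (hg.mono (Icc_subset_Icc_right hx.2)).preimage_isClosed_of_isClosed isClosed_Icc isClosed_Iic
  have hS_bdd : BddAbove S := bddAbove_Icc.mono inter_subset_left
  obtain ⟨⟨has, hsx⟩, hgs⟩ : sSup S ∈ S := hS_closed.csSup_mem ⟨a, haS⟩ hS_bdd
  have hK_lt : ∀ y ∈ Ioc (sSup S) x, K < g y := fun y hy => lt_of_not_ge fun hgy =>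
    (le_csSup hS_bdd ⟨⟨has.trans hy.1.le, hy.2⟩, hgy⟩).not_gt hy.1
  have hsub : Ioo (sSup S) x ⊆ Ioo a b := Ioo_subset_Ioo has hx.2
  have hanti : AntitoneOn g (Icc (sSup S) x) := by
    refine antitoneOn_of_hasDerivWithinAt_nonpos (f' := g') (convex_Icc _ _)
      (hg.mono (Icc_subset_Icc has hx.2)) (fun y hy => ?_) (fun y hy => ?_) <;>
      rw [interior_Icc] at hy
    · exact (hg' y (hsub hy)).hasDerivWithinAt
    · exact hneg y (hsub hy) (hK_lt y (Ioo_subset_Ioc_self hy))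
  exact hKx.not_ge ((hanti ⟨le_rfl, hsx⟩ ⟨hsx, le_rfl⟩ hsx).trans hgs)

theorem norm_le_of_inner_deriv_nonpos_above {E : Type*} [NormedAddCommGroup E]
    [InnerProductSpace ℝ E] {f f' : ℝ → E} {a b M : ℝ} (hf : ContinuousOn f (Icc a b))
    (hf' : ∀ t ∈ Ioo a b, HasDerivAt f (f' t) t)
    (hneg : ∀ t ∈ Ioo a b, M < ‖f t‖ → ⟪f t, f' t⟫ ≤ 0) (ha : ‖f a‖ ≤ M) :
    ∀ t ∈ Icc a b, ‖f t‖ ≤ M := by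
  have hM : 0 ≤ M := (norm_nonneg _).trans ha
  intro t ht
  refine le_of_pow_le_pow_left₀ two_ne_zero hM ?_
  refine image_le_of_deriv_nonpos_above (g := (‖f ·‖ ^ 2)) (hf.norm.pow 2)
    (fun s hs => (hf' s hs).norm_sq) (fun s hs hMs => ?_)
    (pow_le_pow_left₀ (norm_nonneg _) ha 2) t ht
  exact mul_nonpos_of_nonneg_of_nonpos zero_le_two
    (hneg s hs (lt_of_pow_lt_pow_left₀ 2 (norm_nonneg _) hMs))

theorem vector_lyapunov_invariance_general
    (E : Type*) [NormedAddCommGroup E] [InnerProductSpace ℝ E]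
    (t₀ : ℝ) (T : EReal)
    (f f' : ℝ → E) (c : ℝ)
    (hderiv : ∀ t : ℝ, t₀ ≤ t → (t : EReal) < T → HasDerivAt f (f' t) t)
    (hlyap : ∀ t : ℝ, t₀ < t → (t : EReal) < T → ‖f t‖ > c → ⟪f t, f' t⟫ ≤ 0) :
    ∀ t : ℝ, t₀ ≤ t → (t : EReal) < T → ‖f t‖ ≤ max ‖f t₀‖ c := by
  intro t ht₀ htT
  have hsT : ∀ s ∈ Icc t₀ t, (s : EReal) < T :=
    fun s hs => (EReal.coe_le_coe_iff.2 hs.2).trans_lt htT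
  refine norm_le_of_inner_deriv_nonpos_above
    (fun s hs => (hderiv s hs.1 (hsT s hs)).continuousAt.continuousWithinAt)
    (fun s hs => hderiv s hs.1.le (hsT s (Ioo_subset_Icc_self hs)))
    (fun s hs hMs =>
      hlyap s hs.1 (hsT s (Ioo_subset_Icc_self hs)) ((le_max_right _ _).trans_lt hMs))
    (le_max_left _ _) t ⟨ht₀, le_rfl⟩

/-- Vector Lyapunov-type invariance: if `f : ℝ → E` (E a real inner product space)
is differentiable on `[t₀,T)` with derivative `f'`, `c ≥ 0`, and
`⟪f(t), f'(t)⟫ ≤ 0` whenever `‖f(t)‖ > c`, then `‖f(t)‖ ≤ max ‖f t₀‖ c`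
on `[t₀,T)`. Here `T ∈ (t₀, ∞]` is an extended real. -/
theorem vector_lyapunov_invariance
    (E : Type*) [NormedAddCommGroup E] [InnerProductSpace ℝ E]
    (t₀ : ℝ) (T : EReal) (hT : (t₀ : EReal) < T)
    (f f' : ℝ → E) (c : ℝ) (hc : 0 ≤ c)
    (hderiv : ∀ t : ℝ, t₀ ≤ t → (t : EReal) < T → HasDerivAt f (f' t) t)
    (hlyap : ∀ t : ℝ, t₀ < t → (t : EReal) < T → ‖f t‖ > c → ⟪f t, f' t⟫ ≤ 0) :
    ∀ t : ℝ, t₀ ≤ t → (t : EReal) < T → ‖f t‖ ≤ max ‖f t₀‖ c :=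
  vector_lyapunov_invariance_general E t₀ T f f' c hderiv hlyap
end

section
/- Let r > 0, let k ∈ {0,1,2} be a coordinate index, and let a, b ∈ ℝ³ with b = a + 2r·e_k (where e_k is the k-th standard basis vector). Define for a center c ∈ ℝ³ the half-open cube C(c) = { p ∈ ℝ³ : c_i − r ≤ p_i < c_i + r for each coordinate i }. Then for every point x on the line segment joining a and b, the open Euclidean ball of radius r centered at x is contained in C(a) ∪ C(b). -/
/-!
Along the segment only the `k`-th coordinate moves, from `a k` to `a k + 2r`; every other
coordinate of the centre stays equal to that of both `a` and `b`. A point of the open ball is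
within `r` of the centre in each coordinate, so off the axis it lies in the range of both cubes,
and on the axis it lies in `(a k - r, a k + 3r)`, which the two cubes split at `a k + r`.
-/

open Set Metric

variable {ι : Type*}

def halfOpenCube (c : EuclideanSpace ℝ ι) (r : ℝ) : Set (EuclideanSpace ℝ ι) :=
  {p | ∀ i, p i ∈ Ico (c i - r) (c i + r)}

lemma EuclideanSpace.abs_sub_apply_lt_of_mem_ball [Fintype ι] {x p : EuclideanSpace ℝ ι} {r : ℝ}
    (hp : p ∈ ball x r) (i : ι) : |p i - x i| < r :=
  (PiLp.dist_apply_le p x i).trans_lt hp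

lemma EuclideanSpace.apply_mem_segment {a b x : EuclideanSpace ℝ ι} (hx : x ∈ segment ℝ a b)
    (i : ι) : x i ∈ segment ℝ (a i) (b i) := by
  have := mem_image_of_mem
    (EuclideanSpace.proj i : EuclideanSpace ℝ ι →L[ℝ] ℝ).toLinearMap.toAffineMap hx
  rwa [image_segment] at this

lemma mem_Ico_of_abs_sub_lt {x y r : ℝ} (hy : |y - x| < r) : y ∈ Ico (x - r) (x + r) := by
  rw [abs_sub_lt_iff] at hy
  constructor <;> linarith

lemma mem_Ico_or_mem_Ico_of_abs_sub_lt {a b x y r : ℝ} (hx : x ∈ Icc a b) (hba : b ≤ a + 2 * r)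
    (hy : |y - x| < r) : y ∈ Ico (a - r) (a + r) ∨ y ∈ Ico (b - r) (b + r) := by
  obtain ⟨hxy, hyx⟩ := abs_sub_lt_iff.mp hy
  by_cases hya : y < a + r
  · exact Or.inl ⟨by linarith [hx.1], hya⟩
  · exact Or.inr ⟨by linarith, by linarith [hx.2]⟩

lemma ball_subset_halfOpenCube_union [Fintype ι] {a b x : EuclideanSpace ℝ ι} {r : ℝ} {k : ι}
    (hxk : x k ∈ Icc (a k) (b k)) (hba : b k ≤ a k + 2 * r)
    (hoff : ∀ i ≠ k, x i = a i ∧ b i = a i) :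
    ball x r ⊆ halfOpenCube a r ∪ halfOpenCube b r := by
  intro p hp
  have hcoord := EuclideanSpace.abs_sub_apply_lt_of_mem_ball hp
  have hoff_mem : ∀ i ≠ k, p i ∈ Ico (a i - r) (a i + r) ∧ p i ∈ Ico (b i - r) (b i + r) := by
    intro i hik
    obtain ⟨hxa, hba'⟩ := hoff i hik
    rw [hba', ← hxa]
    exact ⟨mem_Ico_of_abs_sub_lt (hcoord i), mem_Ico_of_abs_sub_lt (hcoord i)⟩
  rcases mem_Ico_or_mem_Ico_of_abs_sub_lt hxk hba (hcoord k) with hk | hk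
  · refine Or.inl fun i => ?_
    rcases eq_or_ne i k with rfl | hik
    exacts [hk, (hoff_mem i hik).1]
  · refine Or.inr fun i => ?_
    rcases eq_or_ne i k with rfl | hik
    exacts [hk, (hoff_mem i hik).2]

/-- Adjacent-cell transition containment: if `b = a + 2r·e_k` and `C(c)` denotes the
half-open cube of half-side `r` centered at `c`, then for every `x` on the segment
joining `a` and `b`, the open Euclidean ball `B(x, r)` is contained in `C(a) ∪ C(b)`. -/
theorem ball_along_segment_subset_union_cubes
    (r : ℝ) (hr : 0 < r) (k : Fin 3)
    (a b : EuclideanSpace ℝ (Fin 3))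
    (hb : b = a + (2 * r) • EuclideanSpace.single k (1 : ℝ)) :
    let C : EuclideanSpace ℝ (Fin 3) → Set (EuclideanSpace ℝ (Fin 3)) :=
      fun c => {p | ∀ i : Fin 3, c i - r ≤ p i ∧ p i < c i + r}
    ∀ x ∈ segment ℝ a b, Metric.ball x r ⊆ C a ∪ C b := by
  intro C x hx
  have hbk : b k = a k + 2 * r := by simp [hb]
  have hoff : ∀ i ≠ k, b i = a i := fun i hik => by simp [hb, hik]
  refine ball_subset_halfOpenCube_union (k := k) ?_ hbk.le fun i hik => ⟨?_, hoff i hik⟩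
  · rw [← segment_eq_Icc (by linarith)]
    exact EuclideanSpace.apply_mem_segment hx k
  · simpa [hoff i hik] using EuclideanSpace.apply_mem_segment hx i
end
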